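/- Under the blocker-set-sequence hypothesis (Q_0 = V; every shortest path of exactly h_{i-1} hops from a node of Q_{i-1} meets Q_i; 2h_{i-1} ≤ h_i; every shortest path has at most h_k hops), for every node v lying on a directed cycle, letting C_v be a minimum-weight cycle through v, there exist an out-neighbor u of v, an index j, and a node q ∈ Q_j such that wt(C_v) = w(v,u) + δ^{h_j}(u,q) + δ^{h_j}(q,v). -/

import Mathlib

open scoped ENNReal

variable {V : Type*}

/-- `p` is a walk from `s` to `t` along edges of `E`. -/
def IsWalkFrom (E : V → V → Prop) (s t : V) (p : List V) : Prop :=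
  List.Chain E s p ∧ (s :: p).getLast (List.cons_ne_nil s p) = t

/-- Total weight of the walk `s :: p`. -/
noncomputable def walkWeight (w : V → V → NNReal) (s : V) (p : List V) : ℝ≥0∞ :=
  (List.zipWith (fun a b => ((w a b : ℝ≥0∞))) (s :: p) p).sum

/-- `h`-hop-bounded shortest-path distance (`⊤` if no walk with at most `h` edges exists). -/
noncomputable def hopDist (E : V → V → Prop) (w : V → V → NNReal) (h : ℕ) (s t : V) : ℝ≥0∞ :=
  ⨅ (p : List V) (_ : IsWalkFrom E s t p) (_ : p.length ≤ h), walkWeight w s p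

/-- Shortest-path distance (`⊤` if no walk exists). -/
noncomputable def gdist (E : V → V → Prop) (w : V → V → NNReal) (s t : V) : ℝ≥0∞ :=
  ⨅ (p : List V) (_ : IsWalkFrom E s t p), walkWeight w s p

/-- `c` is a simple (directed) cycle through `v`: a closed walk from `v` to `v`
with at least one edge and no repeated vertices. -/
def IsCycleThrough (E : V → V → Prop) (v : V) (c : List V) : Prop :=
  IsWalkFrom E v v c ∧ c ≠ [] ∧ c.Nodup

/-- `c` is a simple cycle through `v` in an undirected graph (at least 3 edges,
so that no edge is traversed twice). -/
def IsUCycleThrough (E : V → V → Prop) (v : V) (c : List V) : Prop :=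
  IsWalkFrom E v v c ∧ 3 ≤ c.length ∧ c.Nodup

/-- The (undirected) edge `{a, b}` appears on the walk `s :: p`. -/
def MemEdge (s : V) (p : List V) (a b : V) : Prop :=
  ∃ i, i + 1 ≤ p.length ∧
    ((a = (s :: p).getD i s ∧ b = (s :: p).getD (i + 1) s) ∨
     (b = (s :: p).getD i s ∧ a = (s :: p).getD (i + 1) s))

/-!
The tail `u → v` of a minimum-weight cycle through `v` is a shortest path, so it has at most
`h k` hops. Walk along it level by level: at level `i` we hold a node `q ∈ Q i` reached after at
most `h i` hops. Either the rest of the path has at most `h i` hops, and splitting at `q` gives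
the claim, or the next `h i` hops of the (still shortest) remainder meet `Q (i + 1)`, which is
therefore reached after at most `2 h i ≤ h (i + 1)` hops. At level `k` the rest has at most
`h k` hops. Subpaths of shortest paths are shortest, so each of the two pieces weighs exactly
its `h j`-hop distance.
-/

section Walks

variable {E : V → V → Prop} {w : V → V → NNReal} {s t m x : V} {p q : List V}

@[simp]
theorem walkWeight_nil : walkWeight w s [] = 0 := rfl

@[simp]
theorem walkWeight_cons (a : V) : walkWeight w s (a :: p) = w s a + walkWeight w a p := by
  simp [walkWeight]

theorem walkWeight_ne_top : walkWeight w s p ≠ ⊤ := by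
  induction p generalizing s with
  | nil => simp
  | cons a p ih => simpa using ih

theorem isWalkFrom_nil : IsWalkFrom E s t [] ↔ s = t := by
  simp [IsWalkFrom, List.Chain]

theorem isWalkFrom_cons {a : V} : IsWalkFrom E s t (a :: p) ↔ E s a ∧ IsWalkFrom E a t p := by
  simp [IsWalkFrom, List.Chain, and_assoc]

theorem isWalkFrom_append :
    IsWalkFrom E s t (p ++ q) ↔ ∃ m, IsWalkFrom E s m p ∧ IsWalkFrom E m t q := by
  induction p generalizing s with
  | nil => simp [isWalkFrom_nil]
  | cons a p ih => simp [isWalkFrom_cons, ih, and_assoc]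

theorem IsWalkFrom.append (hp : IsWalkFrom E s m p) (hq : IsWalkFrom E m t q) :
    IsWalkFrom E s t (p ++ q) :=
  isWalkFrom_append.2 ⟨m, hp, hq⟩

theorem IsWalkFrom.end_unique (hp : IsWalkFrom E s t p) (hp' : IsWalkFrom E s m p) : t = m :=
  hp.2.symm.trans hp'.2

theorem IsWalkFrom.end_mem (hp : IsWalkFrom E s t p) : t ∈ s :: p :=
  hp.2 ▸ List.getLast_mem _

theorem IsWalkFrom.walkWeight_append (hp : IsWalkFrom E s m p) (q : List V) :
    walkWeight w s (p ++ q) = walkWeight w s p + walkWeight w m q := by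
  induction p generalizing s with
  | nil => obtain rfl := isWalkFrom_nil.1 hp; simp
  | cons a p ih => simp [ih (isWalkFrom_cons.1 hp).2, add_assoc]

theorem IsWalkFrom.exists_split_of_mem (hp : IsWalkFrom E s t p) (hx : x ∈ s :: p) :
    ∃ p₁ p₂, p = p₁ ++ p₂ ∧ IsWalkFrom E s x p₁ ∧ IsWalkFrom E x t p₂ := by
  induction p generalizing s with
  | nil =>
    obtain rfl : x = s := List.mem_singleton.1 hx
    exact ⟨[], [], rfl, isWalkFrom_nil.2 rfl, hp⟩
  | cons a p ih =>
    obtain ⟨hsa, hat⟩ := isWalkFrom_cons.1 hp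
    rcases List.mem_cons.1 hx with rfl | hx
    · exact ⟨[], a :: p, rfl, isWalkFrom_nil.2 rfl, hp⟩
    · obtain ⟨p₁, p₂, rfl, h₁, h₂⟩ := ih hat hx
      exact ⟨a :: p₁, p₂, rfl, isWalkFrom_cons.2 ⟨hsa, h₁⟩, h₂⟩

theorem IsWalkFrom.exists_nodup_walkWeight_le (hp : IsWalkFrom E s t p) :
    ∃ p', IsWalkFrom E s t p' ∧ (s :: p').Nodup ∧ walkWeight w s p' ≤ walkWeight w s p := by
  induction p generalizing s with
  | nil => exact ⟨[], hp, List.nodup_singleton s, le_rfl⟩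
  | cons a p ih =>
    obtain ⟨hsa, hp⟩ := isWalkFrom_cons.1 hp
    obtain ⟨p', hp', hnd, hle⟩ := ih hp
    by_cases hs : s ∈ a :: p'
    · obtain ⟨p₁, p₂, rfl, h₁, h₂⟩ := hp'.exists_split_of_mem hs
      rw [← List.cons_append, List.nodup_append] at hnd
      refine ⟨p₂, h₂, List.nodup_cons.2 ⟨fun h => hnd.2.2 _ h₁.end_mem _ h rfl, hnd.2.1⟩, ?_⟩
      calc walkWeight w s p₂ ≤ walkWeight w a p₁ + walkWeight w s p₂ := le_add_self
        _ = walkWeight w a (p₁ ++ p₂) := (h₁.walkWeight_append p₂).symm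
        _ ≤ walkWeight w s (a :: p) := hle.trans (by simp)
    · exact ⟨a :: p', isWalkFrom_cons.2 ⟨hsa, hp'⟩, List.nodup_cons.2 ⟨hs, hnd⟩,
        by simpa using hle⟩

end Walks

section Distances

variable {E : V → V → Prop} {w : V → V → NNReal} {n : ℕ} {s t m : V} {p q : List V}

theorem gdist_le (hp : IsWalkFrom E s t p) : gdist E w s t ≤ walkWeight w s p :=
  iInf₂_le p hp

theorem hopDist_le (hp : IsWalkFrom E s t p) (hn : p.length ≤ n) :
    hopDist E w n s t ≤ walkWeight w s p :=
  (iInf₂_le p hp).trans (iInf_le _ hn)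

theorem gdist_le_hopDist : gdist E w s t ≤ hopDist E w n s t :=
  le_iInf₂ fun _ hp => le_iInf fun _ => gdist_le hp

theorem gdist_triangle : gdist E w s t ≤ gdist E w s m + gdist E w m t := by
  simp only [gdist, ENNReal.iInf_add, ENNReal.add_iInf]
  refine le_iInf₂ fun q hq => le_iInf₂ fun p hp => ?_
  rw [← hp.walkWeight_append]
  exact gdist_le (hp.append hq)

def IsShortestWalk (E : V → V → Prop) (w : V → V → NNReal) (s t : V) (p : List V) : Prop :=
  IsWalkFrom E s t p ∧ walkWeight w s p = gdist E w s t

theorem IsShortestWalk.of_append (hpq : IsShortestWalk E w s t (p ++ q))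
    (hp : IsWalkFrom E s m p) : IsShortestWalk E w s m p ∧ IsShortestWalk E w m t q := by
  obtain ⟨m', hp', hq⟩ := isWalkFrom_append.1 hpq.1
  obtain rfl := hp'.end_unique hp
  have hp_le : gdist E w s m' ≤ walkWeight w s p := gdist_le hp
  have hq_le : gdist E w m' t ≤ walkWeight w m' q := gdist_le hq
  have hsum : walkWeight w s p + walkWeight w m' q ≤ gdist E w s m' + gdist E w m' t := by
    rw [← hp.walkWeight_append, hpq.2]
    exact gdist_triangle
  refine ⟨⟨hp, le_antisymm ?_ hp_le⟩, ⟨hq, le_antisymm ?_ hq_le⟩⟩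
  · exact (ENNReal.add_le_add_iff_right walkWeight_ne_top).1 (hsum.trans (by gcongr))
  · exact (ENNReal.add_le_add_iff_left walkWeight_ne_top).1 (hsum.trans (by gcongr))

theorem IsShortestWalk.hopDist_eq (hp : IsShortestWalk E w s t p) (hn : p.length ≤ n) :
    hopDist E w n s t = walkWeight w s p :=
  le_antisymm (hopDist_le hp.1 hn) (hp.2 ▸ gdist_le_hopDist)

theorem isShortestWalk_of_isMinCycle {v u : V} (hc : IsCycleThrough E v (u :: p))
    (hmin : ∀ c, IsCycleThrough E v c → walkWeight w v (u :: p) ≤ walkWeight w v c) :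
    IsShortestWalk E w u v p := by
  obtain ⟨hvu, hp⟩ := isWalkFrom_cons.1 hc.1
  refine ⟨hp, le_antisymm ?_ (gdist_le hp)⟩
  by_contra! hlt
  obtain ⟨r, hr, hr_lt⟩ :
      ∃ r, IsWalkFrom E u v r ∧ walkWeight w u r < walkWeight w u p := by
    simpa [gdist, iInf_lt_iff] using hlt
  obtain ⟨r', hr', hnd, hr'_le⟩ := hr.exists_nodup_walkWeight_le (w := w)
  have := hmin (u :: r') ⟨isWalkFrom_cons.2 ⟨hvu, hr'⟩, List.cons_ne_nil _ _, hnd⟩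
  rw [walkWeight_cons, walkWeight_cons, ENNReal.add_le_add_iff_left ENNReal.coe_ne_top] at this
  exact (this.trans hr'_le).not_gt hr_lt

end Distances

section Blockers

variable {E : V → V → Prop} {w : V → V → NNReal} {n : ℕ} {s t : V} {p : List V}

/-- `B` is a blocker set for the shortest `n`-hop walks starting in `A`. -/
def IsBlocker (E : V → V → Prop) (w : V → V → NNReal) (n : ℕ) (A B : Set V) : Prop :=
  ∀ s ∈ A, ∀ t p, IsShortestWalk E w s t p → p.length = n → ∃ x ∈ s :: p, x ∈ B

theorem IsBlocker.exists_split {A B : Set V} (hB : IsBlocker E w n A B) (hs : s ∈ A)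
    (hp : IsShortestWalk E w s t p) (hn : n ≤ p.length) :
    ∃ x ∈ B, ∃ p₁ p₂, p = p₁ ++ p₂ ∧ IsWalkFrom E s x p₁ ∧ p₁.length ≤ n := by
  have hpn : IsShortestWalk E w s t (p.take n ++ p.drop n) := by rwa [List.take_append_drop]
  obtain ⟨y, hy, -⟩ := isWalkFrom_append.1 hpn.1
  obtain ⟨x, hx, hxB⟩ :=
    hB s hs y _ (hpn.of_append hy).1 (List.length_take_of_le hn)
  obtain ⟨p₁, p₂, hsplit, h₁, -⟩ := hy.exists_split_of_mem hx
  refine ⟨x, hxB, p₁, p₂ ++ p.drop n, ?_, h₁, ?_⟩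
  · rw [← List.append_assoc, ← hsplit, List.take_append_drop]
  · have := congrArg List.length hsplit
    simp only [List.length_append, List.length_take] at this
    omega

variable {Q : ℕ → Set V} {h : ℕ → ℕ} {k : ℕ}

theorem IsShortestWalk.exists_eq_hopDist_add_hopDist_of_split
    (hgrow : ∀ i < k, 2 * h i ≤ h (i + 1))
    (hblock : ∀ i < k, IsBlocker E w (h i) (Q i) (Q (i + 1)))
    (hp : IsShortestWalk E w s t p) (hlen : p.length ≤ h k)
    {i : ℕ} (hi : i ≤ k) {q : V} (hq : q ∈ Q i) {p₁ p₂ : List V} (hsplit : p = p₁ ++ p₂)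
    (h₁ : IsWalkFrom E s q p₁) (hl₁ : p₁.length ≤ h i) :
    ∃ j ≤ k, ∃ q ∈ Q j, walkWeight w s p = hopDist E w (h j) s q + hopDist E w (h j) q t := by
  obtain ⟨hs₁, hs₂⟩ := (hsplit ▸ hp).of_append h₁
  by_cases hl₂ : p₂.length ≤ h i
  · refine ⟨i, hi, q, hq, ?_⟩
    rw [hsplit, h₁.walkWeight_append, hs₁.hopDist_eq hl₁, hs₂.hopDist_eq hl₂]
  have hik : i < k := hi.lt_of_ne fun hik => hl₂ <| by
    rw [hik]
    simp only [hsplit, List.length_append] at hlen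
    omega
  obtain ⟨x, hx, a, b, rfl, ha, hla⟩ := (hblock i hik).exists_split hq hs₂ (by omega)
  have hgrow_i := hgrow i hik
  exact IsShortestWalk.exists_eq_hopDist_add_hopDist_of_split hgrow hblock hp hlen hik hx
    (hsplit.trans (List.append_assoc _ _ _).symm) (h₁.append ha)
    (by simp only [List.length_append, Nat.succ_eq_add_one]; omega)
termination_by k - i

theorem IsShortestWalk.exists_eq_hopDist_add_hopDist
    (hgrow : ∀ i < k, 2 * h i ≤ h (i + 1))
    (hblock : ∀ i < k, IsBlocker E w (h i) (Q i) (Q (i + 1)))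
    (hp : IsShortestWalk E w s t p) (hlen : p.length ≤ h k) (hs : s ∈ Q 0) :
    ∃ j ≤ k, ∃ q ∈ Q j, walkWeight w s p = hopDist E w (h j) s q + hopDist E w (h j) q t :=
  hp.exists_eq_hopDist_add_hopDist_of_split hgrow hblock hlen k.zero_le hs rfl
    (isWalkFrom_nil.2 rfl) (Nat.zero_le _)

end Blockers

theorem stmt4_general (E : V → V → Prop) (w : V → V → NNReal)
    (Q : ℕ → Set V) (h : ℕ → ℕ) (k : ℕ)
    (hQ0 : Q 0 = Set.univ)
    (hgrow : ∀ i, 1 ≤ i → i ≤ k → 2 * h (i - 1) ≤ h i)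
    (hblock : ∀ i, 1 ≤ i → i ≤ k → ∀ s' ∈ Q (i - 1), ∀ (t' : V) (p : List V),
      IsWalkFrom E s' t' p → p.length = h (i - 1) →
      walkWeight w s' p = gdist E w s' t' → ∃ x ∈ s' :: p, x ∈ Q i)
    (hbound : ∀ (s t : V) (p : List V), IsWalkFrom E s t p →
      walkWeight w s p = gdist E w s t → p.length ≤ h k)
    (v : V) (c : List V) (hc : IsCycleThrough E v c)
    (hmin : ∀ c' : List V, IsCycleThrough E v c' → walkWeight w v c ≤ walkWeight w v c') :
    ∃ u : V, E v u ∧ ∃ j ≤ k, ∃ q ∈ Q j,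
      walkWeight w v c
        = (w v u : ℝ≥0∞) + hopDist E w (h j) u q + hopDist E w (h j) q v := by
  obtain ⟨u, p, rfl⟩ := List.exists_cons_of_ne_nil hc.2.1
  have hp : IsShortestWalk E w u v p := isShortestWalk_of_isMinCycle hc hmin
  have hgrow' : ∀ i < k, 2 * h i ≤ h (i + 1) := fun i hi => by
    simpa using hgrow (i + 1) (by omega) hi
  have hblock' : ∀ i < k, IsBlocker E w (h i) (Q i) (Q (i + 1)) :=
    fun i hi s hs t p hp hl =>
      hblock (i + 1) (by omega) hi s (by simpa using hs) t p hp.1 (by simpa using hl) hp.2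
  obtain ⟨j, hj, q, hq, hsplit⟩ := hp.exists_eq_hopDist_add_hopDist hgrow' hblock'
    (hbound u v p hp.1 hp.2) (hQ0 ▸ Set.mem_univ u)
  refine ⟨u, (isWalkFrom_cons.1 hc.1).1, j, hj, q, hq, ?_⟩
  rw [walkWeight_cons, hsplit, add_assoc]

theorem stmt4 (E : V → V → Prop) (w : V → V → NNReal)
    (Q : ℕ → Set V) (h : ℕ → ℕ) (k : ℕ)
    (hQ0 : Q 0 = Set.univ)
    (hpos : ∀ i, 0 < h i)
    (hgrow : ∀ i, 1 ≤ i → i ≤ k → 2 * h (i - 1) ≤ h i)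
    (hblock : ∀ i, 1 ≤ i → i ≤ k → ∀ s' ∈ Q (i - 1), ∀ (t' : V) (p : List V),
      IsWalkFrom E s' t' p → p.length = h (i - 1) →
      walkWeight w s' p = gdist E w s' t' → ∃ x ∈ s' :: p, x ∈ Q i)
    (hbound : ∀ (s t : V) (p : List V), IsWalkFrom E s t p →
      walkWeight w s p = gdist E w s t → p.length ≤ h k)
    (v : V) (c : List V) (hc : IsCycleThrough E v c)
    (hmin : ∀ c' : List V, IsCycleThrough E v c' → walkWeight w v c ≤ walkWeight w v c') :
    ∃ u : V, E v u ∧ ∃ j ≤ k, ∃ q ∈ Q j,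
      walkWeight w v c
        = (w v u : ℝ≥0∞) + hopDist E w (h j) u q + hopDist E w (h j) q v :=
  stmt4_general E w Q h k hQ0 hgrow hblock hbound v c hc hmin
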